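/- Let m > 0, ω > 0, and let h satisfy 0 < hω < 2. With the shadow parameters ω'(h) = (1/h)·arccos(1 − h²ω²/2) and m'(h) = mω·√(1 − h²ω²/4)/ω'(h), for every n ∈ ℕ the n-fold iterate of the velocity-Verlet map equals the exact shadow flow sampled at time nh: M_VV(h)ⁿ = [[cos(ω'·nh), sin(ω'·nh)/(m'ω')], [−m'ω' sin(ω'·nh), cos(ω'·nh)]]. Hence every discrete velocity-Verlet trajectory of the harmonic oscillator coincides exactly, at the times tₙ = nh, with a continuous trajectory of the shadow harmonic oscillator. -/

import Mathlib

/-!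
A single velocity-Verlet step is already the exact shadow flow over time `h`. With
`θ = ω' h = arccos (1 - h²ω²/2)` one has `cos θ = 1 - h²ω²/2` and `sin θ = h ω √(1 - h²ω²/4)`,
and `m' ω' = m ω √(1 - h²ω²/4)` then matches both off-diagonal entries (`det M_VV = 1` is what
makes this possible). As the exact flow is a one-parameter group in time, `M_VV(h)ⁿ` is the flow
over time `n h`.
-/

open Matrix

/-- The velocity-Verlet transition matrix for the harmonic oscillator. -/
noncomputable def MVV (m ω h : ℝ) : Matrix (Fin 2) (Fin 2) ℝ :=
  !![1 - h ^ 2 * ω ^ 2 / 2, h / m;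
     -h * m * ω ^ 2 * (1 - h ^ 2 * ω ^ 2 / 4), 1 - h ^ 2 * ω ^ 2 / 2]

open Real

noncomputable def harmonicFlow (m ω t : ℝ) : Matrix (Fin 2) (Fin 2) ℝ :=
  !![cos (ω * t), sin (ω * t) / (m * ω); -m * ω * sin (ω * t), cos (ω * t)]

theorem harmonicFlow_zero (m ω : ℝ) : harmonicFlow m ω 0 = 1 := by
  simp [harmonicFlow, one_fin_two]

section HarmonicFlow

variable {m ω : ℝ}

theorem harmonicFlow_add (hmω : m * ω ≠ 0) (s t : ℝ) :
    harmonicFlow m ω (s + t) = harmonicFlow m ω s * harmonicFlow m ω t := by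
  simp only [harmonicFlow, mul_fin_two, mul_add, cos_add, sin_add, EmbeddingLike.apply_eq_iff_eq,
    vecCons_inj, and_true]
  have hm : m ≠ 0 := left_ne_zero_of_mul hmω
  have hω : ω ≠ 0 := right_ne_zero_of_mul hmω
  refine ⟨⟨?_, ?_⟩, ?_, ?_⟩ <;> field_simp <;> ring

theorem harmonicFlow_pow (hmω : m * ω ≠ 0) (t : ℝ) (n : ℕ) :
    harmonicFlow m ω t ^ n = harmonicFlow m ω (n * t) := by
  induction n with
  | zero => simp [harmonicFlow_zero]
  | succ n ih => rw [pow_succ, ih, ← harmonicFlow_add hmω, Nat.cast_succ, add_one_mul]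

end HarmonicFlow

theorem sin_arccos_one_sub_sq_div_two {x : ℝ} (hx : 0 ≤ x) :
    sin (arccos (1 - x ^ 2 / 2)) = x * √(1 - x ^ 2 / 4) := by
  rw [sin_arccos, show 1 - (1 - x ^ 2 / 2) ^ 2 = x ^ 2 * (1 - x ^ 2 / 4) by ring,
    sqrt_mul (sq_nonneg x), sqrt_sq hx]

noncomputable def shadowFreq (ω h : ℝ) : ℝ :=
  (1 / h) * arccos (1 - h ^ 2 * ω ^ 2 / 2)

noncomputable def shadowMass (m ω h : ℝ) : ℝ :=
  m * ω * √(1 - h ^ 2 * ω ^ 2 / 4) / shadowFreq ω h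

section Shadow

variable {m ω h : ℝ} (hx₀ : 0 < h * ω) (hx₂ : h * ω < 2)
include hx₀

theorem shadowFreq_mul_step : shadowFreq ω h * h = arccos (1 - (h * ω) ^ 2 / 2) := by
  rw [shadowFreq, mul_pow]
  field_simp [left_ne_zero_of_mul hx₀.ne']

theorem shadowFreq_ne_zero : shadowFreq ω h ≠ 0 := by
  refine right_ne_zero_of_mul (a := h) ?_
  rw [mul_comm, shadowFreq_mul_step hx₀]
  exact (arccos_pos.mpr (by nlinarith)).ne'

theorem sin_shadowFreq_mul_step :
    sin (shadowFreq ω h * h) = h * ω * √(1 - h ^ 2 * ω ^ 2 / 4) := by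
  rw [shadowFreq_mul_step hx₀, sin_arccos_one_sub_sq_div_two hx₀.le, mul_pow]

include hx₂

theorem cos_shadowFreq_mul_step : cos (shadowFreq ω h * h) = 1 - h ^ 2 * ω ^ 2 / 2 := by
  rw [shadowFreq_mul_step hx₀, cos_arccos (by nlinarith) (by nlinarith), mul_pow]

theorem sqrt_one_sub_sq_div_four_pos : 0 < √(1 - h ^ 2 * ω ^ 2 / 4) :=
  sqrt_pos.mpr (by nlinarith)

theorem shadowMass_mul_shadowFreq_ne_zero (hm : m ≠ 0) :
    shadowMass m ω h * shadowFreq ω h ≠ 0 := by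
  rw [shadowMass, div_mul_cancel₀ _ (shadowFreq_ne_zero hx₀)]
  exact mul_ne_zero (mul_ne_zero hm (right_ne_zero_of_mul hx₀.ne'))
    (sqrt_one_sub_sq_div_four_pos hx₀ hx₂).ne'

theorem MVV_eq_harmonicFlow :
    MVV m ω h = harmonicFlow (shadowMass m ω h) (shadowFreq ω h) h := by
  have hs := sqrt_one_sub_sq_div_four_pos hx₀ hx₂
  have hω : ω ≠ 0 := right_ne_zero_of_mul hx₀.ne'
  rw [MVV, harmonicFlow, cos_shadowFreq_mul_step hx₀ hx₂, sin_shadowFreq_mul_step hx₀,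
    neg_mul (shadowMass m ω h), shadowMass, div_mul_cancel₀ _ (shadowFreq_ne_zero hx₀)]
  simp only [EmbeddingLike.apply_eq_iff_eq, vecCons_inj, and_true, true_and]
  constructor
  · rw [mul_div_mul_right _ _ hs.ne', mul_div_mul_right _ _ hω]
  · linear_combination (h * m * ω ^ 2) * sq_sqrt (sqrt_pos.mp hs).le

end Shadow

theorem velocity_verlet_iterates_shadow_trajectory_general
    (m ω h : ℝ) (hm : 0 < m)
    (h₁ : 0 < h * ω) (h₂ : h * ω < 2)
    (ω' m' : ℝ)
    (hω' : ω' = (1 / h) * Real.arccos (1 - h ^ 2 * ω ^ 2 / 2))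
    (hm' : m' = m * ω * Real.sqrt (1 - h ^ 2 * ω ^ 2 / 4) / ω') :
    ∀ n : ℕ,
      (MVV m ω h) ^ n =
        !![Real.cos (ω' * (n * h)), Real.sin (ω' * (n * h)) / (m' * ω');
           -m' * ω' * Real.sin (ω' * (n * h)), Real.cos (ω' * (n * h))] := by
  subst hω' hm'
  intro n
  rw [MVV_eq_harmonicFlow h₁ h₂,
    harmonicFlow_pow (shadowMass_mul_shadowFreq_ne_zero h₁ h₂ hm.ne')]
  rfl

/-- The `n`-fold iterate of the velocity-Verlet map equals the exact flow of the
shadow harmonic oscillator (with parameters `m'(h)`, `ω'(h)`) sampled at time `n h`. -/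
theorem velocity_verlet_iterates_shadow_trajectory
    (m ω h : ℝ) (hm : 0 < m) (hω : 0 < ω)
    (h₁ : 0 < h * ω) (h₂ : h * ω < 2)
    (ω' m' : ℝ)
    (hω' : ω' = (1 / h) * Real.arccos (1 - h ^ 2 * ω ^ 2 / 2))
    (hm' : m' = m * ω * Real.sqrt (1 - h ^ 2 * ω ^ 2 / 4) / ω') :
    ∀ n : ℕ,
      (MVV m ω h) ^ n =
        !![Real.cos (ω' * (n * h)), Real.sin (ω' * (n * h)) / (m' * ω');
           -m' * ω' * Real.sin (ω' * (n * h)), Real.cos (ω' * (n * h))] :=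
  velocity_verlet_iterates_shadow_trajectory_general m ω h hm h₁ h₂ ω' m' hω' hm'
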